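/- arXiv:2107.01468 — 11 statements merged into one kernel-verified Lean document; each statement's English description precedes it below -/
import Mathlib

section
/- For every natural number n, every word w : α → Σ over a countable linear order α has a finite subword that is n-equivalent to it: there exists a list s : List Σ such that s is a subword of w and s (viewed as a word on the finite linear order Fin s.length) has exactly the same subwords of length ≤ n as w. -/
/-- A finite word `s : List A` is a subword of a word `w : α → A` over a linear order `α`
if there is a strictly monotone map `g` from `Fin s.length` to `α` picking out `s`. -/
def IsSubword {A : Type*} {α : Type*} [LinearOrder α] (s : List A) (w : α → A) : Prop :=
  ∃ g : Fin s.length → α, StrictMono g ∧ ∀ i, w (g i) = s.get i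

/-- Two words (over possibly different linear orders) are `n`-equivalent if they have
exactly the same subwords of length at most `n`. -/
def NEquiv {A : Type*} (n : ℕ) {α : Type*} {β : Type*} [LinearOrder α] [LinearOrder β]
    (u : α → A) (v : β → A) : Prop :=
  ∀ s : List A, s.length ≤ n → (IsSubword s u ↔ IsSubword s v)

/-!
Only finitely many lists of length `≤ n` are subwords of `w`. Fix one embedding of each; the
letters of `w` at the finitely many positions used, read in order, form the required list.
-/

namespace IsSubword

variable {A α β : Type*} [LinearOrder α] [LinearOrder β]

theorem of_comp {s : List A} {w : α → A} {f : β → α} (hf : StrictMono f)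
    (h : IsSubword s (w ∘ f)) : IsSubword s w := by
  obtain ⟨g, hg, hgs⟩ := h
  exact ⟨f ∘ g, hf.comp hg, hgs⟩

theorem comp_orderIso_iff {s : List A} {w : α → A} (e : β ≃o α) :
    IsSubword s (w ∘ e) ↔ IsSubword s w := by
  refine ⟨of_comp e.strictMono, fun h => of_comp e.symm.strictMono ?_⟩
  simpa [Function.comp_def] using h

theorem self_get (s : List A) : IsSubword s s.get :=
  ⟨id, strictMono_id, fun _ => rfl⟩

theorem ofFn_get_iff {t : List A} {m : ℕ} {f : Fin m → A} :
    IsSubword t (List.ofFn f).get ↔ IsSubword t f := by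
  have hget : (List.ofFn f).get = f ∘ Fin.castOrderIso List.length_ofFn := by
    ext i
    simp only [List.get_ofFn, Function.comp_apply]
    rfl
  rw [hget, comp_orderIso_iff]

theorem exists_finite_restrict {s : List A} {w : α → A} (h : IsSubword s w) :
    ∃ S : Set α, S.Finite ∧ IsSubword s (w ∘ ((↑) : S → α)) := by
  obtain ⟨g, hg, hgs⟩ := h
  exact ⟨Set.range g, Set.finite_range g,
    fun i => ⟨g i, Set.mem_range_self i⟩, fun _ _ hij => hg hij, hgs⟩

theorem restrict_mono {s : List A} {w : α → A} {S T : Set α} (hST : S ⊆ T)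
    (h : IsSubword s (w ∘ ((↑) : S → α))) : IsSubword s (w ∘ ((↑) : T → α)) :=
  of_comp (f := Set.inclusion hST) (fun _ _ hij => hij) h

end IsSubword

theorem exists_finite_restrict_forall_isSubword {A α : Type*} [LinearOrder α] {w : α → A}
    {T : Set (List A)} (hT : T.Finite) (hTw : ∀ t ∈ T, IsSubword t w) :
    ∃ S : Set α, S.Finite ∧ ∀ t ∈ T, IsSubword t (w ∘ ((↑) : S → α)) := by
  choose S hSfin hS using fun t (ht : t ∈ T) => (hTw t ht).exists_finite_restrict
  exact ⟨⋃ t, ⋃ ht : t ∈ T, S t ht, hT.biUnion' hSfin,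
    fun t ht => (hS t ht).restrict_mono (Set.subset_iUnion₂ (s := S) t ht)⟩

theorem exists_list_forall_isSubword_iff {A β : Type*} [LinearOrder β] [Finite β] (v : β → A) :
    ∃ s : List A, ∀ t : List A, IsSubword t s.get ↔ IsSubword t v := by
  have := Fintype.ofFinite β
  refine ⟨List.ofFn (v ∘ monoEquivOfFin β rfl), fun t => ?_⟩
  rw [IsSubword.ofFn_get_iff, IsSubword.comp_orderIso_iff]

theorem exists_finite_subword_nequiv_general {A : Type*} [Finite A] (n : ℕ)
    {α : Type*} [LinearOrder α] (w : α → A) :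
    ∃ s : List A, IsSubword s w ∧ NEquiv n s.get w := by
  set T : Set (List A) := {t | t.length ≤ n ∧ IsSubword t w}
  have hT : T.Finite := (List.finite_length_le A n).subset fun _ ht => ht.1
  obtain ⟨S, hSfin, hS⟩ := exists_finite_restrict_forall_isSubword hT fun _ ht => ht.2
  have := hSfin.to_subtype
  obtain ⟨s, hs⟩ := exists_list_forall_isSubword_iff (w ∘ ((↑) : S → α))
  have hsub : ∀ {t : List A}, IsSubword t s.get → IsSubword t w := fun h =>
    ((hs _).1 h).of_comp (Subtype.strictMono_coe S)
  exact ⟨s, hsub (.self_get s),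
    fun t ht => ⟨hsub, fun htw => (hs t).2 (hS t ⟨ht, htw⟩)⟩⟩

/-- Every countable word has a finite subword that is `n`-equivalent to it. -/
theorem exists_finite_subword_nequiv {A : Type*} [Finite A] [Nonempty A] (n : ℕ)
    {α : Type*} [LinearOrder α] [Countable α] (w : α → A) :
    ∃ s : List A, IsSubword s w ∧ NEquiv n s.get w :=
  exists_finite_subword_nequiv_general n w
end

section
/- Decomposition of subwords of a generalized concatenation: let α be a linear order and for each i : α let wᵢ : β i → Σ be a word. A nonempty list s : List Σ is a subword of the generalized concatenation ∏_{i∈α} wᵢ if and only if there exist k ≥ 1, nonempty lists s₁, …, s_k with s = s₁ ++ ⋯ ++ s_k (so in particular k ≤ s.length), and indices i₁ < i₂ < ⋯ < i_k in α such that s_j is a subword of w_{i_j} for each 1 ≤ j ≤ k. -/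
/-- Generalized concatenation of the family of words `w i : β i → A` over the index
linear order `α`: the word on the lexicographic sigma order sending `⟨i, x⟩` to `w i x`. -/
def genConcat {A : Type*} {α : Type*} {β : α → Type*} (w : ∀ i, β i → A) :
    Lex (Σ i, β i) → A :=
  fun x => w (ofLex x).1 (ofLex x).2

/-!
Subwords of a word are the images of strictly increasing lists of positions. A strictly
increasing list of positions in the lexicographic sum `Σₗ i, β i` cuts into maximal blocks of
positions with a common index `i`: each block is strictly increasing in `β i`, and the block
indices increase strictly. Conversely, concatenating such blocks at strictly increasing indices
gives a strictly increasing list of positions.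
-/

theorem isSubword_iff_exists_pairwise {A α : Type*} [LinearOrder α] (s : List A) (w : α → A) :
    IsSubword s w ↔ ∃ l : List α, l.Pairwise (· < ·) ∧ l.map w = s := by
  constructor
  · rintro ⟨g, hg, hw⟩
    refine ⟨List.ofFn g, List.pairwise_ofFn.2 fun i j h => hg h, ?_⟩
    rw [List.map_ofFn, show w ∘ g = s.get from funext hw, List.ofFn_get]
  · rintro ⟨l, hl, rfl⟩
    exact ⟨fun i => l.get (Fin.cast (l.length_map w) i),
      fun i j hij => List.pairwise_iff_get.1 hl _ _ hij, fun i => by simp⟩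

namespace Sigma.Lex

variable {α : Type*} {β : α → Type*}

def joinBlocks (L : List (Σ i, List (β i))) : List (Σₗ i, β i) :=
  L.flatMap fun p => p.2.map fun b => toLex ⟨p.1, b⟩

theorem map_genConcat_joinBlocks {A : Type*} (w : ∀ i, β i → A)
    (L : List (Σ i, List (β i))) :
    (joinBlocks L).map (genConcat w) = (L.map fun p => p.2.map (w p.1)).flatten := by
  simp [joinBlocks, List.flatMap_def, Function.comp_def, genConcat]

variable [LinearOrder α] [∀ i, LinearOrder (β i)]

theorem pairwise_joinBlocks {L : List (Σ i, List (β i))}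
    (hfst : (L.map Sigma.fst).Pairwise (· < ·)) (hblocks : ∀ p ∈ L, p.2.Pairwise (· < ·)) :
    (joinBlocks L).Pairwise (· < ·) := by
  refine List.pairwise_flatMap.2 ⟨fun p hp => ?_, ?_⟩
  · exact List.pairwise_map.2 ((hblocks p hp).imp (Sigma.Lex.right _ _))
  · refine (List.pairwise_map.1 hfst).imp fun hij x hx y hy => ?_
    obtain ⟨b, -, rfl⟩ := List.mem_map.1 hx
    obtain ⟨c, -, rfl⟩ := List.mem_map.1 hy
    exact Sigma.Lex.left _ _ hij

theorem exists_joinBlocks_eq {l : List (Σₗ i, β i)} (hl : l.Pairwise (· < ·)) :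
    ∃ L : List (Σ i, List (β i)), (L.map Sigma.fst).Pairwise (· < ·) ∧
      (∀ p ∈ L, p.2 ≠ [] ∧ p.2.Pairwise (· < ·)) ∧ joinBlocks L = l := by
  induction l with
  | nil => exact ⟨[], by simp, by simp, rfl⟩
  | cons x xs ih =>
    obtain ⟨hx, hxs⟩ := List.pairwise_cons.1 hl
    obtain ⟨L, hfst, hblocks, rfl⟩ := ih hxs
    obtain ⟨i, b⟩ := x
    rcases L with _ | ⟨⟨j, _ | ⟨c, cs⟩⟩, L⟩
    · exact ⟨[⟨i, [b]⟩], by simp, by simp, rfl⟩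
    · exact absurd rfl (hblocks _ List.mem_cons_self).1
    obtain ⟨hjL, hfstL⟩ := List.pairwise_cons.1 hfst
    obtain ⟨⟨-, hccs⟩, hblocksL⟩ := List.forall_mem_cons.1 hblocks
    -- either `x` opens a new first block, or it joins the first block
    rcases hx (toLex ⟨j, c⟩) (by simp [joinBlocks]) with ⟨_, _, hij⟩ | ⟨_, c, hbc⟩
    · refine ⟨⟨i, [b]⟩ :: ⟨j, c :: cs⟩ :: L, ?_, by simpa using hblocks, rfl⟩
      exact List.pairwise_cons.2
        ⟨List.forall_mem_cons.2 ⟨hij, fun k hk => hij.trans (hjL k hk)⟩, hfst⟩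
    · have hbccs : (b :: c :: cs).Pairwise (· < ·) := by
        rw [← List.isChain_iff_pairwise] at hccs ⊢
        exact hccs.cons_cons hbc
      exact ⟨⟨i, b :: c :: cs⟩ :: L, hfst,
        List.forall_mem_cons.2 ⟨⟨List.cons_ne_nil _ _, hbccs⟩, hblocksL⟩, rfl⟩

end Sigma.Lex

open Sigma.Lex

theorem isSubword_genConcat_iff_general {A : Type*}
    {α : Type*} [LinearOrder α] {β : α → Type*} [∀ i, LinearOrder (β i)]
    (w : ∀ i, β i → A) (s : List A) (hs : s ≠ []) :
    IsSubword s (genConcat w) ↔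
      ∃ k : ℕ, 1 ≤ k ∧ ∃ (t : Fin k → List A) (idx : Fin k → α),
        (∀ j, t j ≠ []) ∧ s = (List.ofFn t).flatten ∧ StrictMono idx ∧
          ∀ j, IsSubword (t j) (w (idx j)) := by
  constructor
  · intro h
    obtain ⟨l, hl, rfl⟩ := (isSubword_iff_exists_pairwise _ _).1 h
    obtain ⟨L, hfst, hblocks, rfl⟩ := exists_joinBlocks_eq hl
    have hL : L ≠ [] := by rintro rfl; exact hs rfl
    refine ⟨L.length, List.length_pos_iff.2 hL, fun j => L[j].2.map (w L[j].1), fun j => L[j].1,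
      fun j => ?_, ?_, fun i j hij => ?_, fun j => ?_⟩
    · simpa using (hblocks _ (L.getElem_mem j.2)).1
    · rw [map_genConcat_joinBlocks, ← List.ofFn_getElem_eq_map]
      rfl
    · exact List.pairwise_iff_get.1 (List.pairwise_map.1 hfst) i j hij
    · exact (isSubword_iff_exists_pairwise _ _).2 ⟨_, (hblocks _ (L.getElem_mem j.2)).2, rfl⟩
  · rintro ⟨k, -, t, idx, -, rfl, hidx, ht⟩
    choose pos hpos hpos_map using fun j => (isSubword_iff_exists_pairwise _ _).1 (ht j)
    refine (isSubword_iff_exists_pairwise _ _).2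
      ⟨joinBlocks (List.ofFn fun j => ⟨idx j, pos j⟩), pairwise_joinBlocks ?_ ?_, ?_⟩
    · simpa [List.map_ofFn, List.pairwise_ofFn] using fun i j hij => hidx hij
    · simpa [List.mem_ofFn] using hpos
    · simp [map_genConcat_joinBlocks, List.map_ofFn, Function.comp_def, hpos_map]

/-- A nonempty list is a subword of a generalized concatenation iff it decomposes as a
concatenation of `k ≥ 1` nonempty lists which are subwords of the factors at `k`
strictly increasing indices. -/
theorem isSubword_genConcat_iff {A : Type*} [Finite A] [Nonempty A]
    {α : Type*} [LinearOrder α] {β : α → Type*} [∀ i, LinearOrder (β i)]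
    (w : ∀ i, β i → A) (s : List A) (hs : s ≠ []) :
    IsSubword s (genConcat w) ↔
      ∃ k : ℕ, 1 ≤ k ∧ ∃ (t : Fin k → List A) (idx : Fin k → α),
        (∀ j, t j ≠ []) ∧ s = (List.ofFn t).flatten ∧ StrictMono idx ∧
          ∀ j, IsSubword (t j) (w (idx j)) :=
  isSubword_genConcat_iff_general w s hs
end

section
/- J-triviality of the n-equivalence quotient: let x and y be words over Σ (over arbitrary linear orders). If there exist words u, v such that the concatenation u·x·v is n-equivalent to y, and there exist words u', v' such that the concatenation u'·y·v' is n-equivalent to x, then x is n-equivalent to y. -/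
/-- Concatenation `u·x·v` of three words, as a word on the lexicographic sum of the
three domains. -/
def concat3 {A : Type*} {γ₁ γ₂ γ₃ : Type*} (u : γ₁ → A) (x : γ₂ → A) (v : γ₃ → A) :
    Lex (γ₁ ⊕ Lex (γ₂ ⊕ γ₃)) → A := fun z =>
  match ofLex z with
  | Sum.inl a => u a
  | Sum.inr b =>
    match ofLex b with
    | Sum.inl c => x c
    | Sum.inr d => v d

theorem IsSubword.of_strictMono {A α β : Type*} [LinearOrder α] [LinearOrder β]
    {s : List A} {w : α → A} {w' : β → A} {f : α → β} (hf : StrictMono f)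
    (hw : ∀ a, w' (f a) = w a) (h : IsSubword s w) : IsSubword s w' := by
  obtain ⟨g, hg, hgs⟩ := h
  exact ⟨f ∘ g, hf.comp hg, fun i => (hw (g i)).trans (hgs i)⟩

theorem IsSubword.concat3 {A γ₁ γ₂ γ₃ : Type*} [LinearOrder γ₁] [LinearOrder γ₂]
    [LinearOrder γ₃] {s : List A} {x : γ₂ → A} (h : IsSubword s x) (u : γ₁ → A)
    (v : γ₃ → A) : IsSubword s (concat3 u x v) :=
  h.of_strictMono (f := fun c => toLex (Sum.inr (toLex (Sum.inl c))))
    (fun _ _ hab => Sum.Lex.inr_lt_inr_iff.mpr (Sum.Lex.inl_lt_inl_iff.mpr hab))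
    fun _ => rfl

theorem nequiv_of_jequiv_general {A : Type*} (n : ℕ)
    {αx αy : Type*} [LinearOrder αx] [LinearOrder αy]
    (x : αx → A) (y : αy → A)
    (h1 : ∃ (γ₁ γ₃ : Type) (_ : LinearOrder γ₁) (_ : LinearOrder γ₃)
      (u : γ₁ → A) (v : γ₃ → A), NEquiv n (concat3 u x v) y)
    (h2 : ∃ (γ₁ γ₃ : Type) (_ : LinearOrder γ₁) (_ : LinearOrder γ₃)
      (u' : γ₁ → A) (v' : γ₃ → A), NEquiv n (concat3 u' y v') x) :
    NEquiv n x y := by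
  obtain ⟨γ₁, γ₃, _, _, u, v, hxy⟩ := h1
  obtain ⟨δ₁, δ₃, _, _, u', v', hyx⟩ := h2
  exact fun s hs =>
    ⟨fun hx => (hxy s hs).mp (hx.concat3 u v), fun hy => (hyx s hs).mp (hy.concat3 u' v')⟩

/-- J-triviality of the `n`-equivalence quotient: if `u·x·v ∼ₙ y` and `u'·y·v' ∼ₙ x`
for some words `u, v, u', v'`, then `x ∼ₙ y`. -/
theorem nequiv_of_jequiv {A : Type*} [Finite A] [Nonempty A] (n : ℕ)
    {αx αy : Type*} [LinearOrder αx] [LinearOrder αy]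
    (x : αx → A) (y : αy → A)
    (h1 : ∃ (γ₁ γ₃ : Type) (_ : LinearOrder γ₁) (_ : LinearOrder γ₃)
      (u : γ₁ → A) (v : γ₃ → A), NEquiv n (concat3 u x v) y)
    (h2 : ∃ (γ₁ γ₃ : Type) (_ : LinearOrder γ₁) (_ : LinearOrder γ₃)
      (u' : γ₁ → A) (v' : γ₃ → A), NEquiv n (concat3 u' y v') x) :
    NEquiv n x y :=
  nequiv_of_jequiv_general n x y h1 h2
end

section
/- Perfect shuffles are n-equivalent to the n-th power of the concatenation: let u₁, …, u_p be nonempty words over Σ and let f : ℚ → Fin p be a perfect shuffle labeling, i.e. for all rationals x < y and every j : Fin p there exists z with x < z < y and f z = j. Then the generalized concatenation ∏_{q∈ℚ} u_{f q} is n-equivalent to the concatenation of n copies of u₁·u₂⋯u_p. -/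
/-!
A subword of length at most `n` of the shuffle meets at most `n` of its factors `u (f q)`;
sending the `k`-th factor met to the `k`-th copy of `u 0 ⋯ u (p-1)` embeds it, letters
included, into the power. Conversely, density of `f` yields rationals `Q (k, j)`, increasing in
the lexicographic order of `(k, j)`, with `f (Q (k, j)) = j`; they embed the whole power into the
shuffle.
-/

section Subword

variable {A α γ : Type*} [LinearOrder α] [LinearOrder γ] {u : α → A} {v : γ → A} {s : List A}

theorem IsSubword.of_strictMono_s4 {φ : α → γ} (hφ : StrictMono φ) (hv : ∀ x, v (φ x) = u x)
    (hs : IsSubword s u) : IsSubword s v := by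
  obtain ⟨g, hg, hgs⟩ := hs
  exact ⟨φ ∘ g, hφ.comp hg, fun i => (hv (g i)).trans (hgs i)⟩

theorem IsSubword.of_forall_finset_embedding
    (h : ∀ S : Finset α, S.card ≤ s.length →
      ∃ φ : S → γ, StrictMono φ ∧ ∀ x, v (φ x) = u x)
    (hs : IsSubword s u) : IsSubword s v := by
  classical
  obtain ⟨g, hg, hgs⟩ := hs
  obtain ⟨φ, hφ, hv⟩ := h (Finset.univ.image g) (Finset.card_image_le.trans (by simp))
  let g' : Fin s.length → Finset.univ.image g := fun i => ⟨g i, by simp⟩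
  exact ⟨φ ∘ g', hφ.comp fun _ _ hij => hg hij, fun i => (hv (g' i)).trans (hgs i)⟩

end Subword

section Cast

variable {A P : Type*} {β : P → Type*} {a b : P}

theorem strictMono_cast_congrArg [∀ j, LinearOrder (β j)] (e : a = b) :
    StrictMono (cast (congrArg β e)) := by
  subst e; exact strictMono_id

theorem apply_cast_congrArg (u : ∀ j, β j → A) (e : a = b) (x : β a) :
    u b (cast (congrArg β e) x) = u a x := by
  subst e; rfl

end Cast

theorem exists_strictMono_labeling {P : Type*} {f : ℚ → P}
    (hf : ∀ x y : ℚ, x < y → ∀ j : P, ∃ z : ℚ, x < z ∧ z < y ∧ f z = j)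
    {κ : Type*} [LinearOrder κ] [Fintype κ] (ℓ : κ → P) :
    ∃ Q : κ → ℚ, StrictMono Q ∧ ∀ k, f (Q k) = ℓ k := by
  let e := (Fintype.orderIsoFinOfCardEq κ rfl).symm
  choose z hz_gt hz_lt hfz using fun k : κ => hf (e k) (e k + 1) (lt_add_one _) (ℓ k)
  refine ⟨z, fun k k' hkk' => ?_, hfz⟩
  have : ((e k : ℕ) : ℚ) + 1 ≤ (e k' : ℕ) := by exact_mod_cast e.strictMono hkk'
  linarith [hz_lt k, hz_gt k']

theorem exists_strictMono_concat_to_pow {A ι P : Type*} [LinearOrder ι] [LinearOrder P]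
    {β : P → Type*} [∀ j, LinearOrder (β j)] (u : ∀ j, β j → A) (f : ι → P) {n : ℕ}
    (S : Finset (Lex (Σ i, β (f i)))) (hS : S.card ≤ n) :
    ∃ φ : S → Lex (Σ _ : Fin n, Lex (Σ j, β j)), StrictMono φ ∧
      ∀ x, genConcat (fun _ => genConcat u) (φ x) = genConcat (fun i => u (f i)) x := by
  classical
  let I := S.image fun x => (ofLex x).1
  have hI : I.card ≤ n := Finset.card_image_le.trans hS
  let rank : I → Fin n := fun i => Fin.castLE hI ((I.orderIsoOfFin rfl).symm i)
  have hrank : StrictMono rank :=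
    (Fin.strictMono_castLE hI).comp (I.orderIsoOfFin rfl).symm.strictMono
  let φ : S → Lex (Σ _ : Fin n, Lex (Σ j, β j)) := fun x =>
    toLex ⟨rank ⟨(ofLex x.1).1, Finset.mem_image_of_mem _ x.2⟩,
      toLex ⟨f (ofLex x.1).1, (ofLex x.1).2⟩⟩
  refine ⟨φ, ?_, fun _ => rfl⟩
  rintro ⟨⟨i, a⟩, hx⟩ ⟨⟨i', a'⟩, hx'⟩ hlt
  change Sigma.Lex (· < ·) (fun _ => (· < ·)) _ _ at hlt
  change Sigma.Lex (· < ·) (fun _ => (· < ·)) _ _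
  cases hlt with
  | left _ _ hi => exact Sigma.Lex.left _ _ (hrank (Subtype.mk_lt_mk.mpr hi))
  | right _ _ ha => exact Sigma.Lex.right _ _ (Sigma.Lex.right _ _ ha)

theorem exists_strictMono_pow_to_shuffle {A κ P : Type*} [LinearOrder κ] [Fintype κ]
    [LinearOrder P] [Fintype P] {β : P → Type*} [∀ j, LinearOrder (β j)] (u : ∀ j, β j → A)
    {f : ℚ → P} (hf : ∀ x y : ℚ, x < y → ∀ j : P, ∃ z : ℚ, x < z ∧ z < y ∧ f z = j) :
    ∃ φ : Lex (Σ _ : κ, Lex (Σ j, β j)) → Lex (Σ q : ℚ, β (f q)), StrictMono φ ∧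
      ∀ x, genConcat (fun q => u (f q)) (φ x) = genConcat (fun _ => genConcat u) x := by
  obtain ⟨Q, hQ, hfQ⟩ := exists_strictMono_labeling hf fun kj : κ ×ₗ P => (ofLex kj).2
  let φ : Lex (Σ _ : κ, Lex (Σ j, β j)) → Lex (Σ q : ℚ, β (f q)) := fun x =>
    let k := (ofLex x).1
    let y := ofLex (ofLex x).2
    toLex ⟨Q (toLex (k, y.1)), cast (congrArg β (hfQ (toLex (k, y.1))).symm) y.2⟩
  refine ⟨φ, ?_, fun _ => apply_cast_congrArg u (hfQ _).symm _⟩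
  rintro ⟨k, j, y⟩ ⟨k', j', y'⟩ hlt
  change Sigma.Lex (· < ·) (fun _ => (· < ·)) _ _ at hlt
  change Sigma.Lex (· < ·) (fun _ => (· < ·)) _ _
  cases hlt with
  | left _ _ hk => exact Sigma.Lex.left _ _ (hQ (Prod.Lex.toLex_lt_toLex.mpr (Or.inl hk)))
  | right _ _ hjy =>
    change Sigma.Lex (· < ·) (fun _ => (· < ·)) _ _ at hjy
    cases hjy with
    | left _ _ hj =>
      exact Sigma.Lex.left _ _ (hQ (Prod.Lex.toLex_lt_toLex.mpr (Or.inr ⟨rfl, hj⟩)))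
    | right _ _ hy => exact Sigma.Lex.right _ _ (strictMono_cast_congrArg (hfQ _).symm hy)

theorem shuffle_nequiv_pow_general {A : Type*} (n : ℕ)
    {p : ℕ} {β : Fin p → Type*} [∀ j, LinearOrder (β j)]
    (u : ∀ j, β j → A) (f : ℚ → Fin p)
    (hf : ∀ x y : ℚ, x < y → ∀ j : Fin p, ∃ z : ℚ, x < z ∧ z < y ∧ f z = j) :
    NEquiv n (genConcat (fun q : ℚ => u (f q)))
      (genConcat (fun _ : Fin n => genConcat u)) := by
  obtain ⟨φ, hφ, hφu⟩ := exists_strictMono_pow_to_shuffle (κ := Fin n) u hf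
  intro s hs
  exact ⟨IsSubword.of_forall_finset_embedding fun S hS =>
      exists_strictMono_concat_to_pow u f S (hS.trans hs),
    IsSubword.of_strictMono_s4 hφ hφu⟩

/-- The perfect shuffle of nonempty words `u 0, …, u (p-1)` (along a dense labeling
`f : ℚ → Fin p`) is `n`-equivalent to the `n`-th power of the concatenation
`u 0 · u 1 ⋯ u (p-1)`. -/
theorem shuffle_nequiv_pow {A : Type*} [Finite A] [Nonempty A] (n : ℕ)
    {p : ℕ} {β : Fin p → Type*} [∀ j, LinearOrder (β j)] [∀ j, Nonempty (β j)]
    (u : ∀ j, β j → A) (f : ℚ → Fin p)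
    (hf : ∀ x y : ℚ, x < y → ∀ j : Fin p, ∃ z : ℚ, x < z ∧ z < y ∧ f z = j) :
    NEquiv n (genConcat (fun q : ℚ => u (f q)))
      (genConcat (fun _ : Fin n => genConcat u)) :=
  shuffle_nequiv_pow_general n u f hf
end

section
/- Prefix approximation of ω-concatenations: for any sequence of words wᵢ : β i → Σ indexed by i : ℕ, there exists k : ℕ such that the generalized concatenation ∏_{i∈ℕ} wᵢ is n-equivalent to the finite concatenation ∏_{i < k} wᵢ (the generalized concatenation over Fin k). -/
/-!
Each subword of the ω-concatenation uses only finitely many positions, hence lies in the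
concatenation of the first `k` words for all large `k`; conversely every prefix embeds
order-preservingly into the whole concatenation. Over a finite alphabet there are only
finitely many words of length at most `n`, so a single `k` works for all of them.
-/

open Filter

theorem IsSubword.of_strictMono_comp {A α γ : Type*} [LinearOrder α] [LinearOrder γ]
    {f : α → γ} (hf : StrictMono f) {v : γ → A} {s : List A} (h : IsSubword s (v ∘ f)) :
    IsSubword s v := by
  obtain ⟨g, hg, hval⟩ := h
  exact ⟨f ∘ g, hf.comp hg, hval⟩

section Reindex

variable {ι α : Type*} {β : α → Type*}

def sigmaLexReindex (f : ι → α) (x : Lex (Σ i, β (f i))) : Lex (Σ a, β a) :=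
  toLex ⟨f (ofLex x).1, (ofLex x).2⟩

theorem strictMono_sigmaLexReindex [Preorder ι] [Preorder α] [∀ a, Preorder (β a)]
    {f : ι → α} (hf : StrictMono f) : StrictMono (sigmaLexReindex (β := β) f) := by
  rintro ⟨i, x⟩ ⟨j, y⟩ (⟨_, _, hij⟩ | ⟨_, _, hxy⟩)
  · exact Sigma.Lex.left _ _ (hf hij)
  · exact Sigma.Lex.right _ _ hxy

theorem IsSubword.of_genConcat_reindex [LinearOrder ι] [LinearOrder α] [∀ a, LinearOrder (β a)]
    {A : Type*} {w : ∀ a, β a → A} {f : ι → α} (hf : StrictMono f) {s : List A}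
    (h : IsSubword s (genConcat fun i => w (f i))) : IsSubword s (genConcat w) :=
  h.of_strictMono_comp (strictMono_sigmaLexReindex hf)

end Reindex

theorem IsSubword.eventually_genConcat_prefix {A : Type*} {β : ℕ → Type*}
    [∀ i, LinearOrder (β i)] {w : ∀ i, β i → A} {s : List A} (h : IsSubword s (genConcat w)) :
    ∀ᶠ k in atTop, IsSubword s (genConcat fun i : Fin k => w i) := by
  obtain ⟨g, hg, hval⟩ := h
  filter_upwards [eventually_all.2 fun j => eventually_gt_atTop (ofLex (g j)).1] with k hk
  let g' : Fin s.length → Lex (Σ i : Fin k, β i) := fun j => toLex ⟨⟨_, hk j⟩, (ofLex (g j)).2⟩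
  refine ⟨g', fun j j' hjj' => ?_, hval⟩
  exact (strictMono_sigmaLexReindex Fin.val_strictMono).lt_iff_lt.1 (hg hjj')

theorem omega_concat_nequiv_prefix_general {A : Type*} [Finite A] (n : ℕ)
    {β : ℕ → Type*} [∀ i, LinearOrder (β i)] (w : ∀ i, β i → A) :
    ∃ k : ℕ, NEquiv n (genConcat w) (genConcat (fun i : Fin k => w i.val)) := by
  have hprefix : ∀ s ∈ {s : List A | s.length ≤ n}, ∀ᶠ k in atTop,
      IsSubword s (genConcat w) → IsSubword s (genConcat fun i : Fin k => w i) :=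
    fun s _ => eventually_imp_distrib_left.2 IsSubword.eventually_genConcat_prefix
  obtain ⟨k, hk⟩ := ((List.finite_length_le A n).eventually_all.2 hprefix).exists
  exact ⟨k, fun s hs => ⟨hk s hs, IsSubword.of_genConcat_reindex Fin.val_strictMono⟩⟩

/-- Prefix approximation of ω-concatenations: an ω-indexed generalized concatenation
is `n`-equivalent to one of its finite prefixes. -/
theorem omega_concat_nequiv_prefix {A : Type*} [Finite A] [Nonempty A] (n : ℕ)
    {β : ℕ → Type*} [∀ i, LinearOrder (β i)] (w : ∀ i, β i → A) :
    ∃ k : ℕ, NEquiv n (genConcat w) (genConcat (fun i : Fin k => w i.val)) :=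
  omega_concat_nequiv_prefix_general n w
end

section
/- The ω-power of a word is n-equivalent to its n-th power: for any word w : β → Σ over a linear order β, the generalized concatenation of ω many copies of w (indexed by ℕ) is n-equivalent to the concatenation of n copies of w (indexed by Fin n). -/
/-!
A subword of length `m` of `∏_{i∈ι} w` meets at most `m` of the factors, so it is already a
subword of `∏_{i∈S} w` for a set `S` of at most `m` indices. For a constant family the
concatenation over `S` embeds into the concatenation over any linear order with at least `#S`
elements, e.g. `Fin n` once `m ≤ n`; conversely `Fin n` embeds into `ℕ`.
-/

theorem IsSubword.of_strictMono_s6 {A α α' : Type*} [LinearOrder α] [LinearOrder α']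
    {s : List A} {u : α → A} {v : α' → A} {φ : α → α'} (hφ : StrictMono φ)
    (hvu : ∀ x, v (φ x) = u x) (h : IsSubword s u) : IsSubword s v := by
  obtain ⟨g, hg, hgs⟩ := h
  exact ⟨φ ∘ g, hφ.comp hg, fun i => (hvu (g i)).trans (hgs i)⟩

theorem Sigma.Lex.strictMono_reindex {ι κ : Type*} [Preorder ι] [Preorder κ] {β : ι → Type*}
    [∀ i, Preorder (β i)] {φ : κ → ι} (hφ : StrictMono φ) :
    StrictMono fun x : _root_.Lex (Σ j, β (φ j)) =>
      toLex (⟨φ (ofLex x).1, (ofLex x).2⟩ : Σ i, β i) := by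
  rintro ⟨j, x⟩ ⟨j', x'⟩ (⟨_, _, hj⟩ | ⟨_, _, hx⟩)
  · exact Sigma.Lex.left _ _ (hφ hj)
  · exact Sigma.Lex.right _ _ hx

section genConcat

variable {A ι κ : Type*} [LinearOrder ι] [LinearOrder κ] {β : ι → Type*}
  [∀ i, LinearOrder (β i)]

theorem IsSubword.genConcat_of_reindex {s : List A} {w : ∀ i, β i → A} {φ : κ → ι}
    (hφ : StrictMono φ) (h : IsSubword s (genConcat fun j => w (φ j))) :
    IsSubword s (genConcat w) :=
  h.of_strictMono_s6 (Sigma.Lex.strictMono_reindex hφ) fun _ => rfl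

theorem IsSubword.exists_genConcat_restrict {s : List A} {w : ∀ i, β i → A}
    (h : IsSubword s (genConcat w)) :
    ∃ S : Finset ι, S.card ≤ s.length ∧ IsSubword s (genConcat fun i : S => w i) := by
  classical
  obtain ⟨g, hg, hgs⟩ := h
  let S : Finset ι := Finset.univ.image fun k => (ofLex (g k)).1
  have hmem (k) : (ofLex (g k)).1 ∈ S := Finset.mem_image_of_mem _ (Finset.mem_univ k)
  refine ⟨S, Finset.card_image_le.trans (by simp), ?_⟩
  have hrestrict := Sigma.Lex.strictMono_reindex (β := β) (Subtype.strictMono_coe (· ∈ S))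
  exact ⟨fun k => toLex ⟨⟨(ofLex (g k)).1, hmem k⟩, (ofLex (g k)).2⟩,
    fun k k' hkk' => hrestrict.lt_iff_lt.mp (hg hkk'), hgs⟩

end genConcat

theorem omega_pow_nequiv_pow_general {A : Type*} (n : ℕ)
    {β : Type*} [LinearOrder β] (w : β → A) :
    NEquiv n (genConcat (fun _ : ℕ => w)) (genConcat (fun _ : Fin n => w)) := by
  intro s hs
  constructor
  · intro h
    obtain ⟨S, hS, hsub⟩ := h.exists_genConcat_restrict
    let e := S.orderIsoOfFin rfl
    have hφ : StrictMono fun i : S => Fin.castLE (hS.trans hs) (e.symm i) :=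
      (Fin.strictMono_castLE _).comp e.symm.strictMono
    exact hsub.genConcat_of_reindex hφ
  · exact IsSubword.genConcat_of_reindex (w := fun _ : ℕ => w) Fin.val_strictMono

/-- The ω-power of a word is `n`-equivalent to its `n`-th power. -/
theorem omega_pow_nequiv_pow {A : Type*} [Finite A] [Nonempty A] (n : ℕ)
    {β : Type*} [LinearOrder β] (w : β → A) :
    NEquiv n (genConcat (fun _ : ℕ => w)) (genConcat (fun _ : Fin n => w)) :=
  omega_pow_nequiv_pow_general n w
end

section
/- Idempotents in a block product of monoids: let M and N be monoids and let (m, f) be an idempotent element of the block product M □ N. Then m is an idempotent of M, and the function (p, q) ↦ f (p * m, m * q) is an idempotent of the pointwise-product monoid N^{M × M}, i.e. f (p * m, m * q) * f (p * m, m * q) = f (p * m, m * q) for all p, q ∈ M. -/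
/-- The carrier of the block product `M □ N`: pairs of an element of `M` and a
function `M × M → N`. -/
structure BlockProd (M : Type*) (N : Type*) where
  fst : M
  snd : M × M → N

namespace BlockProd

variable {M N : Type*} [Monoid M] [Monoid N]

/-- The block product multiplication:
`(m, f) * (m', f') = (m * m', fun (p, q) => f (p, m' * q) * f' (p * m, q))`. -/
def bmul (a b : BlockProd M N) : BlockProd M N :=
  ⟨a.fst * b.fst, fun pq => a.snd (pq.1, b.fst * pq.2) * b.snd (pq.1 * a.fst, pq.2)⟩

/-- The block product monoid structure, with identity `(1, fun _ => 1)`. -/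
instance : Monoid (BlockProd M N) where
  mul := bmul
  one := ⟨1, fun _ => 1⟩
  mul_assoc a b c := by
    show bmul (bmul a b) c = bmul a (bmul b c)
    simp only [bmul]
    congr 1
    · exact mul_assoc _ _ _
    · funext pq
      simp [mul_assoc]
  one_mul a := by
    show bmul ⟨1, fun _ => 1⟩ a = a
    obtain ⟨a1, a2⟩ := a
    simp only [bmul]
    congr 1
    · exact one_mul _
    · funext pq
      simp
  mul_one a := by
    show bmul a ⟨1, fun _ => 1⟩ = a
    obtain ⟨a1, a2⟩ := a
    simp only [bmul]
    congr 1
    · exact mul_one _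
    · funext pq
      simp

end BlockProd

namespace BlockProd

variable {M N : Type*} [Monoid M] [Monoid N]

@[simp]
theorem snd_mul (a b : BlockProd M N) (p q : M) :
    (a * b).snd (p, q) = a.snd (p, b.fst * q) * b.snd (p * a.fst, q) := rfl

theorem isIdempotentElem_fst {e : BlockProd M N} (he : IsIdempotentElem e) :
    IsIdempotentElem e.fst :=
  congrArg fst he

theorem isIdempotentElem_snd {e : BlockProd M N} (he : IsIdempotentElem e) (p q : M) :
    IsIdempotentElem (e.snd (p * e.fst, e.fst * q)) := by
  have hm : e.fst * e.fst = e.fst := (isIdempotentElem_fst he).eq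
  calc e.snd (p * e.fst, e.fst * q) * e.snd (p * e.fst, e.fst * q)
      = (e * e).snd (p * e.fst, e.fst * q) := by
        rw [snd_mul, ← mul_assoc e.fst, hm, mul_assoc p, hm]
    _ = e.snd (p * e.fst, e.fst * q) := by rw [he.eq]

end BlockProd

/-- If `(m, f)` is an idempotent of the block product `M □ N`, then `m` is an idempotent
of `M` and `(p, q) ↦ f (p * m, m * q)` is an idempotent of the pointwise monoid
`N^(M × M)`. -/
theorem blockProd_idempotent {M N : Type*} [Monoid M] [Monoid N]
    (m : M) (f : M × M → N)
    (h : BlockProd.mk m f * BlockProd.mk m f = BlockProd.mk m f) :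
    m * m = m ∧
      ∀ p q : M, f (p * m, m * q) * f (p * m, m * q) = f (p * m, m * q) := by
  exact ⟨BlockProd.isIdempotentElem_fst h, BlockProd.isIdempotentElem_snd h⟩
end

section
/- The classes Iₙ are closed under nonempty intervals: if a linear order γ belongs to Iₙ and X ⊆ γ is a nonempty convex subset (interval), then X with the induced order belongs to Iₙ. -/
/-- `γ` is (isomorphic to) a generalized sum `Σ_{i ∈ ℤ} β i` in which every summand is
either empty or satisfies the predicate `P`, and not all summands are empty. -/
def IsZSum (P : ∀ (α : Type) [LinearOrder α], Prop) (γ : Type) [LinearOrder γ] : Prop :=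
  ∃ (β : ℤ → Type) (_ : ∀ i, LinearOrder (β i)),
    (∀ i, IsEmpty (β i) ∨ P (β i)) ∧ (∃ i, Nonempty (β i)) ∧
      Nonempty (γ ≃o Lex (Σ i, β i))

/-- Membership in the class `Iₙ` (closed under order isomorphism): `I₀` is the class of
nonempty finite linear orders; `I_{n+1}` consists of the finite sums of generalized sums
`Σ_{i ∈ ℤ} β i` whose summands are empty or in `Iₙ`, not all empty. -/
def MemI : ℕ → ∀ (γ : Type) [LinearOrder γ], Prop
  | 0, γ, _ => Finite γ ∧ Nonempty γ
  | n + 1, γ, _ =>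
      ∃ k : ℕ, 0 < k ∧ ∃ (δ : Fin k → Type) (_ : ∀ j, LinearOrder (δ j)),
        (∀ j, IsZSum (MemI n) (δ j)) ∧ Nonempty (γ ≃o Lex (Σ j, δ j))

/-!
An interval of a lexicographic sum `Σₗ i, β i` meets every summand `β i` in an interval (its
slice), and is the lexicographic sum of these slices. So, by induction on `n`, an interval of a
member of `I_{n+1}` is a finite sum of `ℤ`-indexed sums whose summands are slices of members of
`Iₙ`, hence empty or in `Iₙ`. In the outer finite sum the empty slices are dropped by reindexing
along the increasing enumeration of the nonempty ones, which keeps the index type of the form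
`Fin k'`.
-/

open Set

namespace Sigma.Lex

variable {ι ι' : Type*} {β : ι → Type*}

def slice (S : Set (Σₗ i, β i)) (i : ι) : Set (β i) :=
  (fun x => toLex (⟨i, x⟩ : Σ i, β i)) ⁻¹' S

lemma exists_slice_nonempty {S : Set (Σₗ i, β i)} (hS : S.Nonempty) :
    ∃ i, (slice S i).Nonempty :=
  let ⟨s, hs⟩ := hS
  ⟨(ofLex s).1, (ofLex s).2, hs⟩

variable [LinearOrder ι] [LinearOrder ι'] [∀ i, LinearOrder (β i)]

lemma monotone_toLex_mk (i : ι) : Monotone fun x : β i => toLex (⟨i, x⟩ : Σ i, β i) :=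
  fun _ _ h => Sigma.Lex.right _ _ h

lemma _root_.Set.OrdConnected.slice {S : Set (Σₗ i, β i)} (hS : S.OrdConnected) (i : ι) :
    (slice S i).OrdConnected :=
  hS.preimage_mono (monotone_toLex_mk i)

noncomputable def sliceOrderIso (S : Set (Σₗ i, β i)) : S ≃o Σₗ i, slice S i :=
  (StrictMono.orderIsoOfSurjective
    (fun t : Σₗ i, slice S i => (⟨toLex ⟨(ofLex t).1, (ofLex t).2.1⟩, (ofLex t).2.2⟩ : S))
    (by
      rintro ⟨i, x, hx⟩ ⟨j, y, hy⟩ (⟨_, _, hij⟩ | ⟨_, _, hxy⟩)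
      · exact Sigma.Lex.left _ _ hij
      · exact Sigma.Lex.right _ _ hxy)
    (by rintro ⟨⟨i, x⟩, hs⟩; exact ⟨toLex ⟨i, ⟨x, hs⟩⟩, rfl⟩)).symm

noncomputable def reindexOrderIso (f : ι' → ι) (hf : StrictMono f)
    (hrange : ∀ i, Nonempty (β i) → i ∈ range f) : (Σₗ i', β (f i')) ≃o Σₗ i, β i :=
  StrictMono.orderIsoOfSurjective (fun t => toLex ⟨f (ofLex t).1, (ofLex t).2⟩)
    (by
      rintro ⟨i, x⟩ ⟨j, y⟩ (⟨_, _, hij⟩ | ⟨_, _, hxy⟩)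
      · exact Sigma.Lex.left _ _ (hf hij)
      · exact Sigma.Lex.right _ _ hxy)
    (by
      rintro ⟨i, x⟩
      obtain ⟨i', rfl⟩ := hrange i ⟨x⟩
      exact ⟨toLex ⟨i', x⟩, rfl⟩)

lemma exists_orderIso_fin_nonempty {k : ℕ} (β : Fin k → Type*) [∀ j, LinearOrder (β j)] :
    ∃ (k' : ℕ) (f : Fin k' → Fin k),
      (∀ j, Nonempty (β (f j))) ∧ Nonempty ((Σₗ j, β (f j)) ≃o Σₗ j, β j) := by
  classical
  set J := Finset.univ.filter fun j => Nonempty (β j)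
  let g := J.orderIsoOfFin rfl
  refine ⟨J.card, fun j => g j, fun j => (Finset.mem_filter.mp (g j).2).2,
    ⟨reindexOrderIso _ (fun _ _ h => g.strictMono h) fun j hj => ?_⟩⟩
  exact ⟨g.symm ⟨j, Finset.mem_filter.mpr ⟨Finset.mem_univ j, hj⟩⟩, by simp⟩

end Sigma.Lex

open Sigma.Lex

def IsIntervalClosed (P : ∀ (α : Type) [LinearOrder α], Prop) : Prop :=
  ∀ (γ : Type) [LinearOrder γ], P γ → ∀ X : Set γ, X.Nonempty → X.OrdConnected → P X

lemma IsIntervalClosed.isZSum {P : ∀ (α : Type) [LinearOrder α], Prop}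
    (hP : IsIntervalClosed P) : IsIntervalClosed (IsZSum P) := by
  intro γ _ ⟨β, _, hβ, _, ⟨e⟩⟩ X hX hXconv
  set S := e '' X
  have hSconv : S.OrdConnected := ordConnected_image e
  have hsummand (i : ℤ) : IsEmpty (slice S i) ∨ P (slice S i) := by
    rcases (slice S i).eq_empty_or_nonempty with hi | hi
    · exact .inl (isEmpty_coe_sort.mpr hi)
    · have hβi : ¬IsEmpty (β i) := fun h => h.elim hi.some
      exact .inr (hP _ ((hβ i).resolve_left hβi) _ hi (hSconv.slice i))
  obtain ⟨i, hi⟩ := exists_slice_nonempty (hX.image e)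
  exact ⟨fun i => slice S i, fun _ => inferInstance, hsummand, ⟨i, hi.to_subtype⟩,
    ⟨(StrictMonoOn.orderIso e X (e.strictMono.strictMonoOn X)).trans (sliceOrderIso S)⟩⟩

lemma isIntervalClosed_memI (n : ℕ) : IsIntervalClosed (MemI n) := by
  induction n with
  | zero =>
    intro γ _ ⟨_, _⟩ X hX _
    exact ⟨inferInstance, hX.to_subtype⟩
  | succ n ih =>
    intro γ _ ⟨k, _, δ, _, hδ, ⟨e⟩⟩ X hX _
    set S := e '' X
    have hSconv : S.OrdConnected := ordConnected_image e
    obtain ⟨k', f, hf, ⟨e'⟩⟩ := exists_orderIso_fin_nonempty fun j => slice S j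
    let eX : X ≃o Σₗ j', slice S (f j') :=
      ((StrictMonoOn.orderIso e X (e.strictMono.strictMonoOn X)).trans
        (sliceOrderIso S)).trans e'.symm
    exact ⟨k', (ofLex (eX ⟨_, hX.some_mem⟩)).1.pos, fun j' => slice S (f j'), fun _ => inferInstance,
      fun j' => ih.isZSum _ (hδ (f j')) _ (nonempty_coe_sort.mp (hf j')) (hSconv.slice _),
      ⟨eX⟩⟩

/-- The classes `Iₙ` are closed under nonempty intervals: a nonempty convex subset of a
member of `Iₙ`, with the induced order, again belongs to `Iₙ`. -/
theorem memI_of_interval (n : ℕ) (γ : Type) [LinearOrder γ] (h : MemI n γ)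
    (X : Set γ) (hne : X.Nonempty)
    (hconv : ∀ x ∈ X, ∀ y ∈ X, ∀ z, x < z → z < y → z ∈ X) :
    MemI n X :=
  isIntervalClosed_memI n γ h X hne <|
    ordConnected_of_Ioo fun x hx y hy _ z hz => hconv x hx y hy z hz.1 hz.2
end

section
/- Infinitary rank of a binary sum is the maximum of the ranks: if α and β are nonempty linear orders with infinitary rank j and j' respectively (both finite), then the sum α + β has infinitary rank max(j, j'). -/
/-- The infinitary rank of a linear order is `j` if it belongs to `I_j` but to no `I_m`
with `m < j`. -/
def HasRank (j : ℕ) (γ : Type) [LinearOrder γ] : Prop :=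
  MemI j γ ∧ ∀ m, m < j → ¬ MemI m γ

/-!
Each class `Iₙ` is closed under passing to nonempty suborders: a suborder of `Σₗ i, β i` is the
`Σₗ`-sum of its fibres, each a suborder of the corresponding summand, so induction on `n` applies.
The classes increase with `n` (an order is the only summand of a `ℤ`-indexed sum), and they are
closed under binary sums, because the sum of two finite `Σₗ`-sums is the `Σₗ`-sum indexed by the
sum of the two index orders. Hence `α ⊕ₗ β ∈ I_{max j j'}`, while `α ⊕ₗ β ∈ I_m` would put both
`α` and `β`, which embed into it, in `I_m`.
-/

namespace Sigma.Lex

variable {ι κ : Type*} {α : ι → Type*} {β : κ → Type*}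

theorem strictMono_map [Preorder ι] [Preorder κ] [∀ i, Preorder (α i)] [∀ k, Preorder (β k)]
    {g : ι → κ} (hg : StrictMono g) {f : ∀ i, α i → β (g i)} (hf : ∀ i, StrictMono (f i)) :
    StrictMono fun x : Σₗ i, α i => toLex (⟨g (ofLex x).1, f _ (ofLex x).2⟩ : Σ k, β k) := by
  rintro _ _ (⟨a, b, h⟩ | ⟨a, b, h⟩)
  exacts [Sigma.Lex.left _ _ (hg h), Sigma.Lex.right _ _ (hf _ h)]

end Sigma.Lex

theorem Sum.Lex.strictMono_elim {α β γ : Type*} [Preorder α] [Preorder β] [Preorder γ]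
    {f : α → γ} {g : β → γ} (hf : StrictMono f) (hg : StrictMono g) (hfg : ∀ a b, f a < g b) :
    StrictMono fun x : α ⊕ₗ β => Sum.elim f g (ofLex x) := by
  rintro (a | b) (a' | b') h
  · exact hf (Sum.Lex.inl_lt_inl_iff.1 h)
  · exact hfg a b'
  · exact absurd h Sum.Lex.not_inr_lt_inl
  · exact hg (Sum.Lex.inr_lt_inr_iff.1 h)

instance instLinearOrderSumElim.{u} {ι κ : Type*} {α : ι → Type u} {β : κ → Type u}
    [∀ i, LinearOrder (α i)] [∀ k, LinearOrder (β k)] : ∀ x, LinearOrder (Sum.elim α β x)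
  | .inl i => inferInstanceAs (LinearOrder (α i))
  | .inr k => inferInstanceAs (LinearOrder (β k))

namespace OrderIso

variable {ι κ γ : Type*} [LinearOrder ι] [LinearOrder κ] [LinearOrder γ]

noncomputable def sigmaLexReindex (e : ι ≃o κ) (α : κ → Type*) [∀ k, LinearOrder (α k)] :
    (Σₗ i, α (e i)) ≃o Σₗ k, α k :=
  StrictMono.orderIsoOfSurjective (fun x => toLex ⟨e (ofLex x).1, (ofLex x).2⟩)
    (Sigma.Lex.strictMono_map e.strictMono fun _ => strictMono_id) <| by
    rintro ⟨k, v⟩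
    obtain ⟨i, rfl⟩ := e.surjective k
    exact ⟨toLex ⟨i, v⟩, rfl⟩

noncomputable def sigmaLexNonempty (α : ι → Type*) [∀ i, LinearOrder (α i)] :
    (Σₗ i : {i // Nonempty (α i)}, α i) ≃o Σₗ i, α i :=
  StrictMono.orderIsoOfSurjective (fun x => toLex ⟨(ofLex x).1.1, (ofLex x).2⟩)
    (Sigma.Lex.strictMono_map (g := Subtype.val) (fun _ _ h => h) fun _ => strictMono_id)
    (fun ⟨i, a⟩ => ⟨toLex ⟨⟨i, ⟨a⟩⟩, a⟩, rfl⟩)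

noncomputable def sigmaLexSubtype {α : ι → Type*} [∀ i, LinearOrder (α i)]
    (S : Set (Σₗ i, α i)) : (Σₗ i, {a : α i // toLex ⟨i, a⟩ ∈ S}) ≃o S :=
  StrictMono.orderIsoOfSurjective (fun x => ⟨toLex ⟨(ofLex x).1, (ofLex x).2.1⟩, (ofLex x).2.2⟩)
    (fun _ _ h => Sigma.Lex.strictMono_map strictMono_id (fun _ => Subtype.strictMono_coe _) h)
    (fun ⟨⟨i, a⟩, h⟩ => ⟨toLex ⟨i, ⟨a, h⟩⟩, rfl⟩)

noncomputable def sumLexSigmaLex (t : ι ⊕ κ → Type*) [∀ x, LinearOrder (t x)] :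
    (Σₗ i, t (.inl i)) ⊕ₗ (Σₗ k, t (.inr k)) ≃o Σₗ x : ι ⊕ₗ κ, t (ofLex x) :=
  StrictMono.orderIsoOfSurjective
    (fun x => Sum.elim (fun y => toLex ⟨toLex (.inl (ofLex y).1), (ofLex y).2⟩)
      (fun y => toLex ⟨toLex (.inr (ofLex y).1), (ofLex y).2⟩) (ofLex x))
    (Sum.Lex.strictMono_elim
      (Sigma.Lex.strictMono_map (β := fun x : ι ⊕ₗ κ => t (ofLex x)) Sum.Lex.inl_strictMono
        fun _ => strictMono_id)
      (Sigma.Lex.strictMono_map (β := fun x : ι ⊕ₗ κ => t (ofLex x)) Sum.Lex.inr_strictMono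
        fun _ => strictMono_id)
      fun _ _ => Sigma.Lex.left _ _ (Sum.Lex.inl_lt_inr _ _)) <| by
    rintro ⟨i | k, a⟩
    exacts [⟨toLex (.inl (toLex ⟨i, a⟩)), rfl⟩, ⟨toLex (.inr (toLex ⟨k, a⟩)), rfl⟩]

noncomputable def sigmaLexSingle (i₀ : ι) : γ ≃o Σₗ i, {_x : γ // i = i₀} :=
  StrictMono.orderIsoOfSurjective (fun x => toLex ⟨i₀, ⟨x, rfl⟩⟩)
    (fun _ _ h => Sigma.Lex.right _ _ h) (fun ⟨_, ⟨x, rfl⟩⟩ => ⟨x, rfl⟩)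

noncomputable def sigmaLexUnique [Unique ι] : γ ≃o Σₗ _ : ι, γ :=
  StrictMono.orderIsoOfSurjective (fun x => toLex ⟨default, x⟩)
    (fun _ _ h => Sigma.Lex.right _ _ h) <| by
    rintro ⟨i, x⟩
    obtain rfl := Subsingleton.elim i default
    exact ⟨x, rfl⟩

end OrderIso

section MemI

variable {n : ℕ} {γ δ : Type} [LinearOrder γ] [LinearOrder δ]

theorem IsZSum.nonempty {P : ∀ (α : Type) [LinearOrder α], Prop} (h : IsZSum P γ) :
    Nonempty γ := by
  obtain ⟨β, _, -, ⟨i, ⟨b⟩⟩, ⟨e⟩⟩ := h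
  exact ⟨e.symm (toLex ⟨i, b⟩)⟩

theorem MemI.nonempty : ∀ {n : ℕ} {γ : Type} [LinearOrder γ], MemI n γ → Nonempty γ
  | 0, _, _, h => h.2
  | _ + 1, _, _, ⟨_, hk, _, _, hδ, ⟨e⟩⟩ =>
    have ⟨b⟩ := (hδ ⟨0, hk⟩).nonempty
    ⟨e.symm (toLex ⟨_, b⟩)⟩

theorem IsZSum.of_orderIso {P : ∀ (α : Type) [LinearOrder α], Prop} [Nonempty γ]
    {β : ℤ → Type} [∀ i, LinearOrder (β i)] (hβ : ∀ i, Nonempty (β i) → P (β i))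
    (e : γ ≃o Σₗ i, β i) : IsZSum P γ := by
  obtain ⟨x⟩ := ‹Nonempty γ›
  exact ⟨β, inferInstance, fun i => (isEmpty_or_nonempty (β i)).imp_right (hβ i),
    ⟨_, ⟨(ofLex (e x)).2⟩⟩, ⟨e⟩⟩

theorem memI_succ_of_orderIso_sigmaLex {ι : Type} [LinearOrder ι] [Finite ι] [Nonempty ι]
    {δ : ι → Type} [∀ i, LinearOrder (δ i)] (hδ : ∀ i, IsZSum (MemI n) (δ i))
    (e : γ ≃o Σₗ i, δ i) : MemI (n + 1) γ := by
  have := Fintype.ofFinite ι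
  let f := Fintype.orderIsoFinOfCardEq ι rfl
  exact ⟨Fintype.card ι, Fintype.card_pos, fun j => δ (f j), fun _ => inferInstance,
    fun _ => hδ _, ⟨e.trans (OrderIso.sigmaLexReindex f δ).symm⟩⟩

theorem IsZSum.of_orderEmbedding {P : ∀ (α : Type) [LinearOrder α], Prop}
    (hP : ∀ {α β : Type} [LinearOrder α] [LinearOrder β], Nonempty α → (α ↪o β) → P β → P α)
    (hγ : Nonempty γ) (φ : γ ↪o δ) (h : IsZSum P δ) : IsZSum P γ := by
  obtain ⟨β, _, hβ, -, ⟨e⟩⟩ := h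
  let ψ : γ ↪o Σₗ i, β i := φ.trans e.toOrderEmbedding
  refine .of_orderIso (fun i hi => ?_)
    ((OrderEmbedding.orderIso (f := ψ)).trans (OrderIso.sigmaLexSubtype _).symm)
  have : Nonempty (β i) := hi.map Subtype.val
  exact hP hi (OrderEmbedding.subtype _) ((hβ i).resolve_left (not_isEmpty_of_nonempty _))

theorem MemI.of_orderEmbedding : ∀ {n : ℕ} {γ δ : Type} [LinearOrder γ] [LinearOrder δ],
    Nonempty γ → (γ ↪o δ) → MemI n δ → MemI n γ
  | 0, _, _, _, _, hγ, φ, ⟨_, _⟩ => ⟨Finite.of_injective φ φ.injective, hγ⟩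
  | _ + 1, γ, _, _, _, ⟨x⟩, φ, ⟨_, _, ε, _, hε, ⟨e⟩⟩ => by
    let ψ : γ ↪o Σₗ j, ε j := φ.trans e.toOrderEmbedding
    let F j := {a : ε j // toLex ⟨j, a⟩ ∈ Set.range ψ}
    have : Nonempty {j // Nonempty (F j)} := ⟨⟨_, ⟨(ofLex (ψ x)).2, x, rfl⟩⟩⟩
    exact memI_succ_of_orderIso_sigmaLex
      (fun j => (hε j.1).of_orderEmbedding MemI.of_orderEmbedding j.2 (OrderEmbedding.subtype _))
      ((OrderEmbedding.orderIso (f := ψ)).trans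
        ((OrderIso.sigmaLexSubtype _).symm.trans (OrderIso.sigmaLexNonempty F).symm))

theorem MemI.isZSum (h : MemI n γ) : IsZSum (MemI n) γ :=
  have := h.nonempty
  .of_orderIso (fun _ hi => h.of_orderEmbedding hi (OrderEmbedding.subtype _))
    (OrderIso.sigmaLexSingle 0)

theorem MemI.succ (h : MemI n γ) : MemI (n + 1) γ :=
  memI_succ_of_orderIso_sigmaLex (ι := Unit) (fun _ => h.isZSum) OrderIso.sigmaLexUnique

theorem MemI.mono {m : ℕ} (hmn : m ≤ n) (h : MemI m γ) : MemI n γ := by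
  induction hmn with
  | refl => exact h
  | step _ ih => exact ih.succ

theorem MemI.sumLex : ∀ {n : ℕ} {α β : Type} [LinearOrder α] [LinearOrder β],
    MemI n α → MemI n β → MemI n (α ⊕ₗ β)
  | 0, _, _, _, _, ⟨_, ⟨a⟩⟩, ⟨_, _⟩ => ⟨inferInstanceAs (Finite (_ ⊕ _)), ⟨toLex (.inl a)⟩⟩
  | _ + 1, _, _, _, _, ⟨k, hk, ε, _, hε, ⟨e⟩⟩, ⟨k', _, ε', _, hε', ⟨e'⟩⟩ => by
    have : Nonempty (Fin k ⊕ₗ Fin k') := ⟨toLex (.inl ⟨0, hk⟩)⟩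
    refine memI_succ_of_orderIso_sigmaLex (δ := fun x => Sum.elim ε ε' (ofLex x)) ?_
      ((e.sumLexCongr e').trans (OrderIso.sumLexSigmaLex (Sum.elim ε ε')))
    rintro (i | j)
    exacts [hε i, hε' j]

end MemI

theorem hasRank_sum_general (j j' : ℕ) (α β : Type) [LinearOrder α] [LinearOrder β]
    (hα : HasRank j α) (hβ : HasRank j' β) :
    HasRank (max j j') (Lex (α ⊕ β)) := by
  refine ⟨(hα.1.mono (le_max_left j j')).sumLex (hβ.1.mono (le_max_right j j')),
    fun m hm hmem => ?_⟩
  rcases lt_max_iff.1 hm with h | h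
  · exact hα.2 m h (hmem.of_orderEmbedding hα.1.nonempty (.ofStrictMono _ Sum.Lex.inl_strictMono))
  · exact hβ.2 m h (hmem.of_orderEmbedding hβ.1.nonempty (.ofStrictMono _ Sum.Lex.inr_strictMono))

/-- The infinitary rank of a binary (lexicographic) sum of nonempty linear orders is the
maximum of the ranks of the summands. -/
theorem hasRank_sum (j j' : ℕ) (α β : Type) [LinearOrder α] [LinearOrder β]
    [Nonempty α] [Nonempty β] (hα : HasRank j α) (hβ : HasRank j' β) :
    HasRank (max j j') (Lex (α ⊕ β)) :=
  hasRank_sum_general j j' α β hα hβ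
end

section
/- An ω-sum with infinitely many blocks of rank k has rank k + 1: let k ≥ 1 and let (βᵢ)_{i∈ℕ} be linear orders such that every βᵢ is either empty or belongs to I_k, and such that for infinitely many i the order βᵢ is nonempty and does not belong to I_{k-1}. Then the generalized sum Σ_{i∈ℕ} βᵢ (the sigma type over ℕ with the lexicographic order) has infinitary rank exactly k + 1, i.e. it belongs to I_{k+1} but not to I_k. -/
theorem Prod.Lex.snd_le_snd_of_le {α β : Type*} [Preorder α] [LE β] {u v : α ×ₗ β} (h : u ≤ v)
    (h₁ : (ofLex u).1 = (ofLex v).1) : (ofLex u).2 ≤ (ofLex v).2 :=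
  (Prod.Lex.le_iff.1 h).resolve_left (h₁ ▸ lt_irrefl _) |>.2

theorem Sigma.Lex.monotone_fst {ι : Type*} [Preorder ι] {α : ι → Type*} [∀ i, Preorder (α i)] :
    Monotone fun x : Σₗ i, α i => (ofLex x).1 := by
  rintro _ _ (⟨_, _, h⟩ | ⟨_, _, _⟩)
  exacts [h.le, le_rfl]

theorem Sigma.Lex.strictMono_toLex_mk {ι : Type*} [Preorder ι] {α : ι → Type*}
    [∀ i, Preorder (α i)] (i : ι) : StrictMono fun b : α i => toLex (⟨i, b⟩ : Σ i, α i) :=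
  fun _ _ h => Sigma.Lex.right _ _ h

theorem Sigma.Lex.range_toLex_mk {ι : Type*} {α : ι → Type*} (i : ι) :
    Set.range (fun b : α i => toLex (⟨i, b⟩ : Σ i, α i)) = {x | (ofLex x).1 = i} := by
  ext ⟨j, b⟩
  constructor
  · rintro ⟨b', hb'⟩
    exact (congrArg (fun x => (ofLex x).1) hb').symm
  · rintro (rfl : j = i)
    exact ⟨b, rfl⟩

open Set Function

noncomputable def MonotoneOn.sigmaFiberOrderIso {γ I J : Type*} [LinearOrder γ] [LinearOrder I]
    [LinearOrder J] {s : Set γ} {g : γ → J} (hg : MonotoneOn g s) {φ : I → J} (hφ : StrictMono φ)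
    (hgφ : MapsTo g s (range φ)) : Lex (Σ i, ↥(s ∩ g ⁻¹' {φ i})) ≃o s :=
  StrictMono.orderIsoOfSurjective (fun x => ⟨(ofLex x).2.1, (ofLex x).2.2.1⟩)
    (by
      rintro ⟨i, x⟩ ⟨i', y⟩ (⟨_, _, hii'⟩ | ⟨_, _, hxy⟩)
      · refine lt_of_not_ge fun hyx => (hφ hii').not_ge ?_
        rw [← x.2.2, ← y.2.2]
        exact hg y.2.1 x.2.1 hyx
      · exact hxy)
    (by
      rintro ⟨x, hx⟩
      obtain ⟨i, hi⟩ := hgφ hx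
      exact ⟨toLex ⟨i, x, hx, hi.symm⟩, rfl⟩)

section Ranked

variable {γ : Type*} [LinearOrder γ]

/-- `Ranked n s`: the suborder `s` is empty or in `Iₙ` (`ranked_univ_iff`). The `ℤ`-sums of a
finite sum are encoded as the fibres of a monotone map to `J ×ₗ ℤ`, so that the pieces stay
subsets of `γ` instead of summands of an order isomorphism. -/
def Ranked : ℕ → Set γ → Prop
  | 0, s => s.Finite
  | n + 1, s => ∃ (J : Type) (_ : LinearOrder J) (_ : Finite J) (f : γ → J ×ₗ ℤ),
      MonotoneOn f s ∧ ∀ p, Ranked n (s ∩ f ⁻¹' {p})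

theorem Ranked.mono : ∀ {n : ℕ} {s t : Set γ}, t ⊆ s → Ranked n s → Ranked n t
  | 0, _, _, hts, hs => Finite.subset hs hts
  | _ + 1, _, _, hts, ⟨J, _, hJ, f, hf, hfib⟩ =>
    ⟨J, _, hJ, f, hf.mono hts, fun p => (hfib p).mono (inter_subset_inter_left _ hts)⟩

theorem ranked_empty : ∀ n : ℕ, Ranked n (∅ : Set γ)
  | 0 => finite_empty
  | n + 1 => ⟨PUnit, inferInstance, inferInstance, fun _ => toLex (PUnit.unit, 0),
      fun _ h => h.elim, fun _ => by simpa using ranked_empty n⟩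

theorem Ranked.image {α : Type*} [LinearOrder α] {g : α → γ} (hg : StrictMono g) :
    ∀ {n : ℕ} {s : Set α}, Ranked n s → Ranked n (g '' s)
  | 0, _, hs => Set.Finite.image g hs
  | n + 1, s, ⟨J, _, hJ, f, hf, hfib⟩ => by
    rcases s.eq_empty_or_nonempty with rfl | ⟨a, -⟩
    · simpa using ranked_empty (n + 1)
    have : Nonempty α := ⟨a⟩
    have hinv : LeftInverse (invFun g) g := leftInverse_invFun hg.injective
    refine ⟨J, inferInstance, hJ, f ∘ invFun g, ?_, fun p => ?_⟩
    · rintro _ ⟨x, hx, rfl⟩ _ ⟨y, hy, rfl⟩ hxy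
      simpa [hinv _] using hf hx hy (hg.le_iff_le.1 hxy)
    · convert (hfib p).image hg using 1
      ext y
      constructor
      · rintro ⟨⟨x, hx, rfl⟩, hp⟩
        exact ⟨x, ⟨hx, by simpa [hinv x] using hp⟩, rfl⟩
      · rintro ⟨x, ⟨hx, hp⟩, rfl⟩
        exact ⟨⟨x, hx, rfl⟩, by simpa [hinv x] using hp⟩

theorem Ranked.of_fibers {J : Type} [LinearOrder J] [Finite J] {s : Set γ} {f : γ → J}
    (hf : MonotoneOn f s) : ∀ {n : ℕ}, (∀ j, Ranked n (s ∩ f ⁻¹' {j})) → Ranked n s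
  | 0, h => (finite_iUnion h).subset fun x hx => mem_iUnion.2 ⟨f x, hx, rfl⟩
  | n + 1, h => by
    choose K _ _ g hg hfib using h
    refine ⟨Lex (Σ j, K j), inferInstance, inferInstanceAs (Finite (Σ j, K j)),
      fun x => toLex (toLex ⟨f x, (ofLex (g (f x) x)).1⟩, (ofLex (g (f x) x)).2), ?_, ?_⟩
    · intro x hx y hy hxy
      rcases (hf hx hy hxy).lt_or_eq with hlt | heq
      · exact (Prod.Lex.toLex_lt_toLex.2 (Or.inl (Sigma.Lex.left _ _ hlt))).le
      · have hgxy := hg (f x) ⟨hx, rfl⟩ ⟨hy, heq.symm⟩ hxy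
        beta_reduce
        rw [← heq]
        rcases Prod.Lex.le_iff.1 hgxy with hlt | ⟨heq₁, hle₂⟩
        · exact (Prod.Lex.toLex_lt_toLex.2 (Or.inl (Sigma.Lex.right _ _ hlt))).le
        · exact Prod.Lex.toLex_le_toLex.2 (Or.inr ⟨by rw [heq₁], hle₂⟩)
    · rintro ⟨⟨j, a⟩, m⟩
      refine (hfib j (toLex (a, m))).mono ?_
      rintro x ⟨hx, hFx⟩
      have hfst := congrArg (fun q => ofLex (ofLex q).1) hFx
      have hsnd := congrArg (fun q => (ofLex q).2) hFx
      obtain ⟨rfl, ha⟩ := Sigma.mk.inj_iff.1 hfst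
      exact ⟨⟨hx, rfl⟩, Prod.ext (eq_of_heq ha) hsnd⟩

theorem Ranked.inter_Icc {n : ℕ} {s : Set γ} {J : Type*} [LinearOrder J] {f : γ → J ×ₗ ℤ}
    (hf : MonotoneOn f s) (hfib : ∀ p, Ranked n (s ∩ f ⁻¹' {p})) {a b : γ} (ha : a ∈ s)
    (hb : b ∈ s) (hab : (ofLex (f a)).1 = (ofLex (f b)).1) : Ranked n (s ∩ Icc a b) := by
  rcases lt_or_ge b a with hba | hab'
  · exact (hfib (f a)).mono (by simp [Icc_eq_empty_of_lt hba])
  have hbetween : ∀ x ∈ s ∩ Icc a b, (ofLex (f x)).1 = (ofLex (f a)).1 ∧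
      (ofLex (f x)).2 ∈ Icc (ofLex (f a)).2 (ofLex (f b)).2 := by
    rintro x ⟨hx, hax, hxb⟩
    have hfax := hf ha hx hax
    have hfxb := hf hx hb hxb
    have hfst : (ofLex (f x)).1 = (ofLex (f a)).1 :=
      le_antisymm (hab ▸ Prod.Lex.monotone_fst _ _ hfxb) (Prod.Lex.monotone_fst _ _ hfax)
    exact ⟨hfst, Prod.Lex.snd_le_snd_of_le hfax hfst.symm,
      Prod.Lex.snd_le_snd_of_le hfxb (hfst.trans hab)⟩
  have hab₂ := (hbetween a ⟨ha, le_rfl, hab'⟩).2.2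
  refine Ranked.of_fibers (f := fun x => projIcc _ _ hab₂ (ofLex (f x)).2) ?_ fun q =>
    (hfib (toLex ((ofLex (f a)).1, q))).mono ?_
  · intro x hx y hy hxy
    exact monotone_projIcc _ (Prod.Lex.snd_le_snd_of_le (hf hx.1 hy.1 hxy)
      ((hbetween x hx).1.trans (hbetween y hy).1.symm))
  · rintro x ⟨hx, rfl⟩
    refine ⟨hx.1, congrArg toLex (Prod.ext (hbetween x hx).1 ?_)⟩
    exact (congrArg Subtype.val (projIcc_of_mem hab₂ (hbetween x hx).2)).symm

end Ranked

section MemI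

variable {γ : Type} [LinearOrder γ]

theorem MemI.congr {n : ℕ} {γ' : Type} [LinearOrder γ'] (e : γ ≃o γ')
    (h : MemI n γ) : MemI n γ' := by
  cases n with
  | zero => exact ⟨@Finite.of_equiv _ _ h.1 e.toEquiv, h.2.map e⟩
  | succ n =>
    obtain ⟨k, hk, δ, _, hδ, ⟨g⟩⟩ := h
    exact ⟨k, hk, δ, _, hδ, ⟨e.symm.trans g⟩⟩

theorem Ranked.memI : ∀ {n : ℕ} {s : Set γ}, Ranked n s → s.Nonempty → MemI n s
  | 0, _, hs, hne => ⟨hs.to_subtype, hne.to_subtype⟩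
  | n + 1, s, ⟨J, _, _, f, hf, hfib⟩, ⟨x₀, hx₀⟩ => by
    set f₁ : γ → J := fun x => (ofLex (f x)).1
    set f₂ : γ → ℤ := fun x => (ofLex (f x)).2
    have : Fintype ↥(f₁ '' s) := (toFinite _).fintype
    let e := monoEquivOfFin ↥(f₁ '' s) rfl
    have hk : 0 < Fintype.card ↥(f₁ '' s) :=
      Fintype.card_pos_iff.2 ⟨⟨_, mem_image_of_mem f₁ hx₀⟩⟩
    have hφ : StrictMono fun r => (e r : J) := (Subtype.strictMono_coe _).comp e.strictMono
    refine ⟨_, hk, fun r => ↥(s ∩ f₁ ⁻¹' {(e r : J)}), fun _ => inferInstance, fun r => ?_,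
      ⟨((Prod.Lex.monotone_fst_ofLex.comp_monotoneOn hf).sigmaFiberOrderIso hφ ?_).symm⟩⟩
    · have hf₂ : MonotoneOn f₂ (s ∩ f₁ ⁻¹' {(e r : J)}) := fun x hx y hy hxy =>
        Prod.Lex.snd_le_snd_of_le (hf hx.1 hy.1 hxy) (hx.2.trans hy.2.symm)
      obtain ⟨x, hx, hxr⟩ := (e r).2
      refine ⟨fun m => ↥((s ∩ f₁ ⁻¹' {(e r : J)}) ∩ f₂ ⁻¹' {m}), fun _ => inferInstance,
        fun m => ?_, ⟨f₂ x, ⟨x, ⟨hx, hxr⟩, rfl⟩⟩,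
        ⟨(hf₂.sigmaFiberOrderIso strictMono_id fun x _ => mem_range_self _).symm⟩⟩
      have hfiber :
          (s ∩ f₁ ⁻¹' {(e r : J)}) ∩ f₂ ⁻¹' {m} = s ∩ f ⁻¹' {toLex ((e r : J), m)} := by
        ext x
        simp only [mem_inter_iff, mem_preimage, mem_singleton_iff, f₁, f₂, ← ofLex_inj,
          ofLex_toLex, Prod.ext_iff, and_assoc]
      beta_reduce
      rw [hfiber]
      rcases (s ∩ f ⁻¹' {toLex ((e r : J), m)}).eq_empty_or_nonempty with h | h
      · exact Or.inl (isEmpty_coe_sort.2 h)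
      · exact Or.inr (Ranked.memI (hfib _) h)
    · intro x hx
      exact ⟨e.symm ⟨f₁ x, mem_image_of_mem f₁ hx⟩, by simp [f₁]⟩

end MemI

section Sum

variable {ι : Type} [LinearOrder ι] {β : ι → Type*} [∀ i, LinearOrder (β i)] {n : ℕ}

theorem Ranked.setOf_fst_eq {i : ι} (h : Ranked n (univ : Set (β i))) :
    Ranked n {x : Σₗ i, β i | (ofLex x).1 = i} := by
  simpa [← Sigma.Lex.range_toLex_mk, ← image_univ] using
    h.image (Sigma.Lex.strictMono_toLex_mk (α := β) i)

theorem ranked_univ_sigmaLex [Finite ι] (h : ∀ i, Ranked n (univ : Set (β i))) :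
    Ranked n (univ : Set (Σₗ i, β i)) :=
  Ranked.of_fibers (Sigma.Lex.monotone_fst.monotoneOn _) fun i =>
    (h i).setOf_fst_eq.mono fun _ hx => hx.2

theorem ranked_univ_sigmaLex_succ {e : ι → ℤ} (he : StrictMono e)
    (h : ∀ i, Ranked n (univ : Set (β i))) : Ranked (n + 1) (univ : Set (Σₗ i, β i)) := by
  refine ⟨PUnit, inferInstance, inferInstance, fun x => toLex (PUnit.unit, e (ofLex x).1),
    fun x _ y _ hxy => ?_, fun p => ?_⟩
  · exact Prod.Lex.toLex_le_toLex.2 (Or.inr ⟨rfl, he.monotone (Sigma.Lex.monotone_fst hxy)⟩)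
  rcases (univ ∩ _ ⁻¹' {p}).eq_empty_or_nonempty with hp | ⟨x, -, hx⟩
  · rw [hp]
    exact ranked_empty n
  exact (h (ofLex x).1).setOf_fst_eq.mono fun y hy =>
    he.injective (congrArg (fun q => (ofLex q).2) (hy.2.trans hx.symm))

end Sum

theorem ranked_univ_of_isEmpty_or_memI : ∀ {n : ℕ} {γ : Type} [LinearOrder γ],
    IsEmpty γ ∨ MemI n γ → Ranked n (univ : Set γ)
  | n, _, _, .inl h => by
    rw [univ_eq_empty_iff.2 h]
    exact ranked_empty n
  | 0, _, _, .inr h => @finite_univ _ h.1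
  | n + 1, _, _, .inr ⟨_, _, δ, _, hδ, ⟨e⟩⟩ => by
    have hδ : ∀ j, Ranked (n + 1) (univ : Set (δ j)) := fun j => by
      obtain ⟨β, _, hβ, -, ⟨ej⟩⟩ := hδ j
      simpa using (ranked_univ_sigmaLex_succ strictMono_id fun m =>
        ranked_univ_of_isEmpty_or_memI (hβ m)).image ej.symm.strictMono
    simpa using (ranked_univ_sigmaLex hδ).image e.symm.strictMono

theorem ranked_univ_iff {n : ℕ} {γ : Type} [LinearOrder γ] :
    Ranked n (univ : Set γ) ↔ IsEmpty γ ∨ MemI n γ := by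
  refine ⟨fun h => ?_, ranked_univ_of_isEmpty_or_memI⟩
  rcases isEmpty_or_nonempty γ with hγ | hγ
  · exact .inl hγ
  · exact .inr ((h.memI univ_nonempty).congr (OrderIso.Set.univ))

theorem memI_of_ranked_setOf_fst_eq {ι : Type} [LinearOrder ι] {β : ι → Type}
    [∀ i, LinearOrder (β i)] {n : ℕ} {i : ι} (h : Ranked n {x : Σₗ i, β i | (ofLex x).1 = i})
    (hne : Nonempty (β i)) : MemI n (β i) :=
  (h.memI ⟨toLex ⟨i, hne.some⟩, rfl⟩).congr
    ((StrictMono.orderIso _ (Sigma.Lex.strictMono_toLex_mk i)).trans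
      (OrderIso.setCongr _ _ (Sigma.Lex.range_toLex_mk i))).symm

theorem finite_setOf_not_ranked_fst_eq {ι : Type} [LinearOrder ι] [LocallyFiniteOrderBot ι]
    {β : ι → Type*} [∀ i, LinearOrder (β i)] {n : ℕ}
    (h : Ranked (n + 1) (univ : Set (Σₗ i, β i))) :
    {i | ¬ Ranked n {x : Σₗ i, β i | (ofLex x).1 = i}}.Finite := by
  obtain ⟨J, _, _, f, hf, hfib⟩ := h
  set S := {i | ¬ Ranked n {x : Σₗ i, β i | (ofLex x).1 = i}}
  by_contra hS
  have hpt : ∀ i ∈ S, ∃ x : Σₗ i, β i, (ofLex x).1 = i := fun i hi => by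
    by_contra! hempty
    exact hi ((ranked_empty n).mono fun x hx => hempty x hx)
  have : Nonempty (Σₗ i, β i) :=
    let ⟨i, hi⟩ := Set.Infinite.nonempty hS
    let ⟨x, _⟩ := hpt i hi
    ⟨x⟩
  choose! x hx using hpt
  obtain ⟨j, hj⟩ : ∃ j, (S ∩ (fun i => (ofLex (f (x i))).1) ⁻¹' {j}).Infinite := by
    by_contra! hfin
    exact hS ((finite_iUnion hfin).subset fun i hi => mem_iUnion.2 ⟨_, hi, rfl⟩)
  obtain ⟨i₀, hi₀⟩ := hj.nonempty
  obtain ⟨i₁, hi₁, h₀₁⟩ := hj.exists_gt i₀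
  obtain ⟨i₂, hi₂, h₁₂⟩ := hj.exists_gt i₁
  refine hi₁.1 ((Ranked.inter_Icc hf hfib (mem_univ (x i₀)) (mem_univ (x i₂))
    (hi₀.2.trans hi₂.2.symm)).mono ?_)
  intro y (hy : (ofLex y).1 = i₁)
  refine ⟨mem_univ y, ?_, ?_⟩
  · exact Sigma.Lex.le_def.2 (Or.inl ((hx i₀ hi₀.1).trans_lt (h₀₁.trans_eq hy.symm)))
  · exact Sigma.Lex.le_def.2 (Or.inl (hy.trans_lt (h₁₂.trans_eq (hx i₂ hi₂.1).symm)))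

/-- An ω-sum of blocks, each empty or in `I_k`, with infinitely many nonempty blocks not
in `I_{k-1}`, has infinitary rank exactly `k + 1`: it is in `I_{k+1}` but not in `I_k`. -/
theorem omega_sum_rank (k : ℕ) (hk : 1 ≤ k) (β : ℕ → Type) [∀ i, LinearOrder (β i)]
    (h1 : ∀ i, IsEmpty (β i) ∨ MemI k (β i))
    (h2 : {i : ℕ | Nonempty (β i) ∧ ¬ MemI (k - 1) (β i)}.Infinite) :
    MemI (k + 1) (Lex (Σ i, β i)) ∧ ¬ MemI k (Lex (Σ i, β i)) := by
  constructor
  · obtain ⟨i, ⟨b⟩, -⟩ := h2.nonempty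
    have : Nonempty (Σₗ i, β i) := ⟨toLex ⟨i, b⟩⟩
    exact (ranked_univ_iff.1 (ranked_univ_sigmaLex_succ Nat.strictMono_cast fun i =>
      ranked_univ_iff.2 (h1 i))).resolve_left (not_isEmpty_of_nonempty _)
  intro hmem
  obtain ⟨n, rfl⟩ : ∃ n, k = n + 1 := ⟨k - 1, by omega⟩
  refine h2 ((finite_setOf_not_ranked_fst_eq (ranked_univ_iff.2 (.inr hmem))).subset ?_)
  rintro i ⟨hne, hnot⟩ hranked
  exact hnot (memI_of_ranked_setOf_fst_eq hranked hne)
end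

section
/- The order ω has infinitary rank 1 and the order ω² has infinitary rank 2: the linear order ℕ belongs to I₁ but not to I₀, and the lexicographic product ℕ ×ₗ ℕ (order type ω²) belongs to I₂ but not to I₁. -/
/-!
`ω` and `ω²` are `ℤ`-sums of the fibres of the monotone maps `n ↦ n` and `(m, n) ↦ m`, whose
nonempty fibres are a point and a copy of `ω`. Conversely, a `ℤ`-sum of finite orders has finite
intervals, and in a sum over `Fin k` of such orders two of the points `(0, 0), (1, 0), …` of `ω²`
fall into the same summand and so bound a finite interval; but every interval `[(m, 0), (n, 0)]`
with `m < n` contains all `(m, t)`.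
-/

open Set

namespace Sigma.Lex

variable {ι : Type*} {β : ι → Type*}

theorem monotone_fst_s15 [Preorder ι] [∀ i, Preorder (β i)] :
    Monotone fun a : Σₗ i, β i => (ofLex a).1 := by
  rintro _ _ (⟨_, _, h⟩ | ⟨_, _, _⟩)
  exacts [h.le, le_rfl]

theorem finite_Icc [Preorder ι] [LocallyFiniteOrder ι] [∀ i, Preorder (β i)]
    [∀ i, Finite (β i)] (a b : Σₗ i, β i) : (Icc a b).Finite := by
  refine ((Set.finite_Icc (ofLex a).1 (ofLex b).1).biUnion fun i _ =>
    finite_range fun x : β i => toLex (⟨i, x⟩ : Σ i, β i)).subset ?_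
  rintro c ⟨hac, hcb⟩
  exact mem_biUnion ⟨monotone_fst_s15 hac, monotone_fst_s15 hcb⟩ ⟨(ofLex c).2, rfl⟩

theorem finite_Icc_of_fst_eq [PartialOrder ι] [∀ i, Preorder (β i)]
    (hβ : ∀ i (x y : β i), (Icc x y).Finite) {a b : Σₗ i, β i} (hab : (ofLex a).1 = (ofLex b).1) :
    (Icc a b).Finite := by
  obtain ⟨i, x⟩ := a
  obtain ⟨j, y⟩ := b
  obtain rfl : i = j := hab
  refine ((hβ i x y).image fun z => toLex (⟨i, z⟩ : Σ i, β i)).subset ?_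
  rintro ⟨k, z⟩ ⟨hxz, hzy⟩
  have hik : i ≤ k := monotone_fst_s15 hxz
  obtain rfl : i = k := hik.antisymm (monotone_fst_s15 hzy)
  rcases hxz with ⟨_, _, h⟩ | ⟨_, _, hxz⟩
  · exact absurd h (lt_irrefl i)
  rcases hzy with ⟨_, _, h⟩ | ⟨_, _, hzy⟩
  · exact absurd h (lt_irrefl i)
  exact ⟨z, ⟨hxz, hzy⟩, rfl⟩

end Sigma.Lex

namespace OrderIso

variable {ι : Type*}

noncomputable def uniqueSigmaLex [LinearOrder ι] [Unique ι] (β : ι → Type*)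
    [∀ i, LinearOrder (β i)] : (Σₗ i, β i) ≃o β default :=
  (StrictMono.orderIsoOfSurjective (fun x : β default => toLex (⟨default, x⟩ : Σ i, β i))
    (fun _ _ h => Sigma.Lex.right _ _ h)
    (by rintro ⟨i, x⟩; obtain rfl := Unique.eq_default i; exact ⟨x, rfl⟩)).symm

noncomputable def sigmaLexFiber {α : Type*} [LinearOrder ι] [LinearOrder α] {f : α → ι}
    (hf : Monotone f) : (Σₗ i, {x // f x = i}) ≃o α :=
  StrictMono.orderIsoOfSurjective (fun a => ((ofLex a).2 : α))
    (by
      rintro ⟨i, x, rfl⟩ ⟨j, y, hy⟩ (⟨_, _, h⟩ | ⟨_, _, h⟩)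
      exacts [hf.reflect_lt (hy ▸ h), h])
    (fun x => ⟨toLex ⟨f x, x, rfl⟩, rfl⟩)

end OrderIso

section Rank

variable {γ γ' : Type} [LinearOrder γ] [LinearOrder γ']

theorem MemI.of_orderIso {n : ℕ} (e : γ ≃o γ') (h : MemI n γ) : MemI n γ' := by
  cases n with
  | zero => exact ⟨@Finite.of_equiv _ _ h.1 e.toEquiv, h.2.map e⟩
  | succ n =>
    obtain ⟨k, hk, δ, _, hδ, ⟨e'⟩⟩ := h
    exact ⟨k, hk, δ, _, hδ, ⟨e.symm.trans e'⟩⟩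

theorem MemI.succ_of_isZSum {n : ℕ} (h : IsZSum (MemI n) γ) : MemI (n + 1) γ :=
  ⟨1, one_pos, fun _ => γ, _, fun _ => h, ⟨(OrderIso.uniqueSigmaLex fun _ : Fin 1 => γ).symm⟩⟩

theorem isZSum_of_monotone {P : ∀ (α : Type) [LinearOrder α], Prop} [Nonempty γ] {f : γ → ℤ}
    (hf : Monotone f) (hP : ∀ i, IsEmpty {x // f x = i} ∨ P {x // f x = i}) : IsZSum P γ :=
  have x := Classical.arbitrary γ
  ⟨_, _, hP, ⟨f x, ⟨x, rfl⟩⟩, ⟨(OrderIso.sigmaLexFiber hf).symm⟩⟩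

theorem IsZSum.finite_Icc (h : IsZSum (MemI 0) γ) (a b : γ) : (Icc a b).Finite := by
  obtain ⟨β, _, hβ, -, ⟨e⟩⟩ := h
  have : ∀ i, Finite (β i) := fun i => (hβ i).elim (fun _ => inferInstance) And.left
  exact .of_finite_image (by rw [e.image_Icc]; exact Sigma.Lex.finite_Icc _ _) e.injective.injOn

theorem MemI.exists_lt_finite_Icc (h : MemI 1 γ) (p : ℕ → γ) :
    ∃ m n, m < n ∧ (Icc (p m) (p n)).Finite := by
  obtain ⟨k, -, δ, _, hδ, ⟨e⟩⟩ := h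
  have hIcc : ∀ {m n}, (ofLex (e (p m))).1 = (ofLex (e (p n))).1 → (Icc (p m) (p n)).Finite :=
    fun hmn => .of_finite_image (by
      rw [e.image_Icc]
      exact Sigma.Lex.finite_Icc_of_fst_eq (fun j => (hδ j).finite_Icc) hmn) e.injective.injOn
  obtain ⟨m, n, hne, hmn⟩ := Finite.exists_ne_map_eq_of_infinite fun m => (ofLex (e (p m))).1
  rcases hne.lt_or_gt with hlt | hlt
  exacts [⟨m, n, hlt, hIcc hmn⟩, ⟨n, m, hlt, hIcc hmn.symm⟩]

end Rank

theorem memI_one_nat : MemI 1 ℕ := by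
  refine MemI.succ_of_isZSum (isZSum_of_monotone (f := Nat.cast) Nat.mono_cast fun i => ?_)
  have : Subsingleton {n : ℕ // (n : ℤ) = i} :=
    ⟨fun ⟨_, hm⟩ ⟨_, hn⟩ => Subtype.ext (Nat.cast_injective (hm.trans hn.symm))⟩
  exact (isEmpty_or_nonempty _).imp_right fun hne => ⟨inferInstance, hne⟩

theorem not_memI_zero_nat : ¬ MemI 0 ℕ :=
  fun ⟨_, _⟩ => not_finite ℕ

theorem memI_two_nat_lex_nat : MemI 2 (ℕ ×ₗ ℕ) := by
  refine MemI.succ_of_isZSum (isZSum_of_monotone (f := fun p => ((ofLex p).1 : ℤ))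
    (Nat.mono_cast.comp Prod.Lex.monotone_fst_ofLex) fun i => ?_)
  refine (isEmpty_or_nonempty _).imp_right fun ⟨⟨p, hp⟩⟩ => memI_one_nat.of_orderIso ?_
  refine StrictMono.orderIsoOfSurjective (fun t => ⟨toLex ((ofLex p).1, t), hp⟩)
    (fun s t hst => Subtype.mk_lt_mk.2 (Prod.Lex.lt_iff.2 (Or.inr ⟨rfl, hst⟩))) ?_
  rintro ⟨⟨a, b⟩, hab⟩
  obtain rfl : (ofLex p).1 = a := Nat.cast_injective (hp.trans hab.symm)
  exact ⟨b, rfl⟩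

theorem not_memI_one_nat_lex_nat : ¬ MemI 1 (ℕ ×ₗ ℕ) := by
  intro h
  obtain ⟨m, n, hmn, hfin⟩ := h.exists_lt_finite_Icc fun m => toLex (m, 0)
  refine (infinite_of_injective_forall_mem (f := fun t => toLex (m, t)) ?_ fun t => ?_) hfin
  · intro s t hst
    simpa using hst
  · exact ⟨Prod.Lex.le_iff.2 (Or.inr ⟨rfl, t.zero_le⟩), Prod.Lex.le_iff.2 (Or.inl hmn)⟩

/-- `ω` (the order `ℕ`) has infinitary rank `1`, and `ω²` (the lexicographic product
`ℕ ×ₗ ℕ`) has infinitary rank `2`. -/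
theorem omega_rank_one_omega_sq_rank_two :
    (MemI 1 ℕ ∧ ¬ MemI 0 ℕ) ∧ (MemI 2 (ℕ ×ₗ ℕ) ∧ ¬ MemI 1 (ℕ ×ₗ ℕ)) :=
  ⟨⟨memI_one_nat, not_memI_zero_nat⟩, memI_two_nat_lex_nat, not_memI_one_nat_lex_nat⟩
end
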